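/- arXiv:2604.12937 — 2 statements merged into one kernel-verified Lean document; each statement's English description precedes it below -/
import Mathlib

section
/- Let V be a grading-restricted vertex algebra. For every k ∈ ℕ, l, p, n ∈ ℤ with l + p ∈ ℕ, and u, v ∈ V with v homogeneous of weight wt v, the element ∑_{j∈ℕ, n+p−j≥0} (−1)^j C(p,j) [v]_{k,n+p−j} ⋄ [u]_{n+p−j,l+p} − ∑_{j∈ℕ, l−n+k+p−j≥0} (−1)^{p−j} C(p,j) [u]_{k,l−n+k+p−j} ⋄ [v]_{l−n+k+p−j,l+p} − ∑_{j∈ℕ} C(wt v + n − k − 1, j) [v_{p+j} u]_{k,l+p} of U^∞(V) lies in Q^∞(V). -/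
noncomputable section

open scoped BigOperators

/-- The generalized binomial coefficient `C(m, k)` for `m : ℤ`, as a complex number. -/
def cchoose (m : ℤ) (k : ℕ) : ℂ :=
  (∏ i ∈ Finset.range k, ((m : ℂ) - (i : ℂ))) / (k.factorial : ℂ)

/-- A grading-restricted vertex algebra structure on a complex vector space `V`,
presented via the projections `proj n` onto the weight spaces `V_(n)` and the
modes `mode u n = u_n` of the vertex operator `Y(u,x) = ∑ u_n x^{-n-1}`. -/
structure GRVertexAlgebra (V : Type) [AddCommGroup V] [Module ℂ V] : Type where
  /-- projection onto the weight-`n` subspace `V_(n)` -/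
  proj : ℤ → V →ₗ[ℂ] V
  /-- `mode u n v = u_n v` -/
  mode : V → ℤ → V → V
  /-- the vacuum vector `𝟙` -/
  one : V
  mode_add_left : ∀ (u u' : V) (n : ℤ) (v : V),
    mode (u + u') n v = mode u n v + mode u' n v
  mode_smul_left : ∀ (c : ℂ) (u : V) (n : ℤ) (v : V),
    mode (c • u) n v = c • mode u n v
  mode_add_right : ∀ (u : V) (n : ℤ) (v v' : V),
    mode u n (v + v') = mode u n v + mode u n v'
  mode_smul_right : ∀ (u : V) (n : ℤ) (c : ℂ) (v : V),
    mode u n (c • v) = c • mode u n v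
  proj_idem : ∀ (m n : ℤ) (v : V), proj m (proj n v) = if m = n then proj n v else 0
  proj_support_finite : ∀ v : V, (Function.support fun n : ℤ => proj n v).Finite
  proj_sum : ∀ v : V, (∑ᶠ n : ℤ, proj n v) = v
  /-- each weight space is finite dimensional -/
  grading_finite_dim : ∀ n : ℤ, FiniteDimensional ℂ (LinearMap.range (proj n))
  /-- the grading is bounded below -/
  grading_bounded_below : ∃ N : ℤ, ∀ n : ℤ, n < N → proj n = 0
  /-- lower truncation: `u_n v = 0` for `n` sufficiently large -/
  lower_trunc : ∀ u v : V, ∃ N : ℤ, ∀ n : ℤ, N ≤ n → mode u n v = 0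
  /-- the vacuum is homogeneous of weight `0` -/
  one_homogeneous : proj 0 one = one
  /-- identity property `Y(𝟙,x) = 1` -/
  identity_prop : ∀ (n : ℤ) (v : V), mode one n v = if n = -1 then v else 0
  /-- creation property, regular part -/
  creation : ∀ (u : V) (n : ℤ), 0 ≤ n → mode u n one = 0
  /-- creation property, constant term: `lim_{x→0} Y(u,x)𝟙 = u` -/
  creation_limit : ∀ u : V, mode u (-1) one = u
  /-- the Jacobi identity, in terms of modes -/
  jacobi : ∀ (a b c : V) (l m n : ℤ),
      (∑ᶠ i : ℕ, cchoose m i • mode (mode a (l + i) b) (m + n - i) c)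
    = (∑ᶠ i : ℕ, ((-1 : ℂ) ^ (i : ℕ) * cchoose l i) • mode a (m + l - i) (mode b (n + i) c))
      - (∑ᶠ i : ℕ, ((-1 : ℂ) ^ (l + i : ℤ) * cchoose l i) •
          mode b (n + l - i) (mode a (m + i) c))
  /-- `L(0)`-bracket formula, where `L(0) v = ∑ n • proj n v` -/
  L0_bracket : ∀ (a v : V) (n : ℤ),
      (∑ᶠ m : ℤ, (m : ℂ) • proj m (mode a n v)) - mode a n (∑ᶠ m : ℤ, (m : ℂ) • proj m v)
    = mode (∑ᶠ m : ℤ, (m : ℂ) • proj m a) n v + (-(n : ℂ) - 1) • mode a n v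
  /-- `L(-1)`-derivative formula, where `L(-1) u = u_{-2} 𝟙`:
  `Y(L(-1)u, x) = (d/dx) Y(u,x)` -/
  Lneg1_deriv : ∀ (u v : V) (n : ℤ),
      mode (mode u (-2) one) n v = (-(n : ℂ)) • mode u (n - 1) v
  /-- `L(-1)`-bracket formula: `[L(-1), Y(u,x)] = Y(L(-1)u, x)` -/
  Lneg1_bracket : ∀ (u v : V) (n : ℤ),
      mode (mode u n v) (-2) one - mode u n (mode v (-2) one)
    = mode (mode u (-2) one) n v

namespace GRVertexAlgebra

variable {V : Type} [AddCommGroup V] [Module ℂ V]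

/-- The operator `L(0)`. -/
def L0op (VA : GRVertexAlgebra V) (v : V) : V := ∑ᶠ m : ℤ, (m : ℂ) • VA.proj m v

/-- The operator `L(-1)`. -/
def Lneg1op (VA : GRVertexAlgebra V) (v : V) : V := VA.mode v (-2) VA.one

/-- `u` is homogeneous (of some weight). -/
def Homogeneous (VA : GRVertexAlgebra V) (u : V) : Prop := ∃ w : ℤ, VA.proj w u = u

lemma mode_zero_left (VA : GRVertexAlgebra V) (n : ℤ) (v : V) : VA.mode 0 n v = 0 := by
  simpa using VA.mode_smul_left 0 0 n v

lemma mode_zero_right (VA : GRVertexAlgebra V) (u : V) (n : ℤ) : VA.mode u n 0 = 0 := by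
  simpa using VA.mode_smul_right u n 0 0

/-- `Res_x x^N (1+x)^{l + L(0)-weight} Y(u, x) v`, i.e. the residue
`Res_x x^N (1+x)^l Y((1+x)^{L(0)} u, x) v`, expressed in terms of modes and the
homogeneous components of `u`. -/
def resPow (VA : GRVertexAlgebra V) (N l : ℤ) (u v : V) : V :=
  ∑ᶠ m : ℤ, ∑ᶠ i : ℕ, cchoose (l + m) i • VA.mode (VA.proj m u) (N + i) v

end GRVertexAlgebra

section UInf

variable (V : Type) [AddCommGroup V] [Module ℂ V]

/-- The space of column-finite `ℕ × ℕ` matrices with entries in `V`, as a submodule of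
the space of all doubly indexed families. -/
def UInfSub : Submodule ℂ (ℕ → ℕ → V) where
  carrier := {A | ∀ l : ℕ, (Function.support fun k => A k l).Finite}
  add_mem' := by
    intro A B hA hB l
    refine Set.Finite.subset ((hA l).union (hB l)) ?_
    intro k hk
    by_contra h
    simp only [Set.mem_union, Function.mem_support, not_or, not_not] at h
    exact hk (by simp [Pi.add_apply, h.1, h.2])
  zero_mem' := by
    intro l
    simp [Function.support]
  smul_mem' := by
    intro c A hA l
    refine Set.Finite.subset (hA l) ?_
    intro k hk
    by_contra h
    simp only [Function.mem_support, not_not] at h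
    exact hk (by simp [Pi.smul_apply, h])

/-- `U^∞(V)`: column-finite `ℕ × ℕ` matrices with entries in `V`. -/
def UInf : Type := ↥(UInfSub V)

instance : AddCommGroup (UInf V) := by unfold UInf; infer_instance
instance : Module ℂ (UInf V) := by unfold UInf; infer_instance

end UInf

namespace GRVertexAlgebra

variable {V : Type} [AddCommGroup V] [Module ℂ V]

/-- `[v]_{kl} = v ⊗ E_{kl}`, the matrix with entry `v` in position `(k,l)` and `0` elsewhere. -/
def Usingle (v : V) (k l : ℕ) : UInf V :=
  ⟨fun k' l' => if k' = k ∧ l' = l then v else 0, by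
    intro l'
    refine Set.Finite.subset (Set.finite_singleton k) ?_
    intro k' hk'
    simp only [Function.mem_support] at hk'
    by_contra h
    simp only [Set.mem_singleton_iff] at h
    exact hk' (by simp [h])⟩

/-- The `(k,l)` entry of the product `[u]_{kn} ⋄ [v]_{nl}`:
`∑_{m=0}^{n} C(-k+n-l-1, m) Res_x x^{-k+n-l-m-1} (1+x)^l Y((1+x)^{L(0)} u, x) v`. -/
def diamondEntry (VA : GRVertexAlgebra V) (u v : V) (k n l : ℕ) : V :=
  ∑ m ∈ Finset.range (n + 1),
    cchoose (-(k : ℤ) + n - l - 1) m • VA.resPow (-(k : ℤ) + n - l - m - 1) l u v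

lemma resPow_zero_left (VA : GRVertexAlgebra V) (N l : ℤ) (v : V) :
    VA.resPow N l 0 v = 0 := by
  unfold GRVertexAlgebra.resPow
  have h : ∀ m : ℤ, (∑ᶠ i : ℕ, cchoose (l + m) i • VA.mode (VA.proj m (0 : V)) (N + i) v) = 0 := by
    intro m
    have : ∀ i : ℕ, cchoose (l + m) i • VA.mode (VA.proj m (0 : V)) (N + i) v = 0 := by
      intro i
      rw [map_zero, VA.mode_zero_left]
      simp
    simp only [this]
    exact finsum_zero
  simp only [h]
  exact finsum_zero

lemma resPow_zero_right (VA : GRVertexAlgebra V) (N l : ℤ) (u : V) :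
    VA.resPow N l u 0 = 0 := by
  unfold GRVertexAlgebra.resPow
  have h : ∀ m : ℤ, (∑ᶠ i : ℕ, cchoose (l + m) i • VA.mode (VA.proj m u) (N + i) (0 : V)) = 0 := by
    intro m
    have : ∀ i : ℕ, cchoose (l + m) i • VA.mode (VA.proj m u) (N + i) (0 : V) = 0 := by
      intro i
      rw [VA.mode_zero_right]
      simp
    simp only [this]
    exact finsum_zero
  simp only [h]
  exact finsum_zero

lemma diamondEntry_zero_left (VA : GRVertexAlgebra V) (v : V) (k n l : ℕ) :
    VA.diamondEntry 0 v k n l = 0 := by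
  unfold GRVertexAlgebra.diamondEntry
  simp [VA.resPow_zero_left]

lemma diamondEntry_zero_right (VA : GRVertexAlgebra V) (u : V) (k n l : ℕ) :
    VA.diamondEntry u 0 k n l = 0 := by
  unfold GRVertexAlgebra.diamondEntry
  simp [VA.resPow_zero_right]

/-- The product `⋄` on `U^∞(V)`. -/
def udiamond (VA : GRVertexAlgebra V) (A B : UInf V) : UInf V :=
  ⟨fun k l => ∑ᶠ n : ℕ, VA.diamondEntry (A.1 k n) (B.1 n l) k n l, by
    intro l
    refine Set.Finite.subset
      (Set.Finite.biUnion (B.2 l) (fun n _ => A.2 n)) ?_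
    intro k hk
    simp only [Function.mem_support] at hk
    by_contra h
    apply hk
    have hterm : ∀ n : ℕ, VA.diamondEntry (A.1 k n) (B.1 n l) k n l = 0 := by
      intro n
      by_cases hB : B.1 n l = 0
      · rw [hB]; exact VA.diamondEntry_zero_right _ _ _ _
      · have hA : A.1 k n = 0 := by
          by_contra hA
          exact h (Set.mem_biUnion (by exact hB) (by exact hA))
        rw [hA]; exact VA.diamondEntry_zero_left _ _ _ _
    simp only [hterm]
    exact finsum_zero⟩

end GRVertexAlgebra
/-- A lower-bounded generalized module for a grading-restricted vertex algebra,
presented via the mode action `wmode`, the projections `wproj μ` onto the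
(generalized-eigenvalue) weight spaces `W_(μ)`, and the operators `L_W(0)`, `L_W(-1)`. -/
structure LBGModule {V : Type} [AddCommGroup V] [Module ℂ V]
    (VA : GRVertexAlgebra V) (W : Type) [AddCommGroup W] [Module ℂ W] : Type where
  /-- `wmode u n w = u_n w`, the modes of `Y_W(u,x) = ∑ u_n x^{-n-1}` -/
  wmode : V → ℤ → W → W
  /-- projection onto the weight-`μ` subspace `W_(μ)` -/
  wproj : ℂ → W →ₗ[ℂ] W
  /-- the operator `L_W(0)` -/
  LW0 : W →ₗ[ℂ] W
  /-- the operator `L_W(-1)` -/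
  LW1 : W →ₗ[ℂ] W
  wmode_add_left : ∀ (u u' : V) (n : ℤ) (w : W),
    wmode (u + u') n w = wmode u n w + wmode u' n w
  wmode_smul_left : ∀ (c : ℂ) (u : V) (n : ℤ) (w : W),
    wmode (c • u) n w = c • wmode u n w
  wmode_add_right : ∀ (u : V) (n : ℤ) (w w' : W),
    wmode u n (w + w') = wmode u n w + wmode u n w'
  wmode_smul_right : ∀ (u : V) (n : ℤ) (c : ℂ) (w : W),
    wmode u n (c • w) = c • wmode u n w
  wproj_idem : ∀ (μ ν : ℂ) (w : W), wproj μ (wproj ν w) = if μ = ν then wproj ν w else 0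
  wproj_support_finite : ∀ w : W, (Function.support fun μ : ℂ => wproj μ w).Finite
  wproj_sum : ∀ w : W, (∑ᶠ μ : ℂ, wproj μ w) = w
  /-- the grading is bounded below in real part -/
  grading_bounded_below : ∃ B : ℝ, ∀ μ : ℂ, μ.re < B → wproj μ = 0
  /-- lower truncation -/
  lower_trunc : ∀ (u : V) (w : W), ∃ N : ℤ, ∀ n : ℤ, N ≤ n → wmode u n w = 0
  /-- identity property `Y_W(𝟙,x) = 1` -/
  identity_prop : ∀ (n : ℤ) (w : W), wmode VA.one n w = if n = -1 then w else 0
  /-- the Jacobi identity for the module -/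
  jacobi : ∀ (a b : V) (w : W) (l m n : ℤ),
      (∑ᶠ i : ℕ, cchoose m i • wmode (VA.mode a (l + i) b) (m + n - i) w)
    = (∑ᶠ i : ℕ, ((-1 : ℂ) ^ (i : ℕ) * cchoose l i) • wmode a (m + l - i) (wmode b (n + i) w))
      - (∑ᶠ i : ℕ, ((-1 : ℂ) ^ (l + i : ℤ) * cchoose l i) •
          wmode b (n + l - i) (wmode a (m + i) w))
  /-- `W_(μ)` is the generalized eigenspace of `L_W(0)` with eigenvalue `μ` -/
  gen_eigenspace : ∀ (μ : ℂ) (w : W),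
    ∃ k : ℕ, (((LW0 - μ • LinearMap.id : Module.End ℂ W) ^ k) : W →ₗ[ℂ] W) (wproj μ w) = 0
  gen_eigenspace_mem : ∀ (μ : ℂ) (w : W),
    (∃ k : ℕ, (((LW0 - μ • LinearMap.id : Module.End ℂ W) ^ k) : W →ₗ[ℂ] W) w = 0) → wproj μ w = w
  /-- `L_W(0)`-bracket formula -/
  LW0_bracket : ∀ (a : V) (w : W) (n : ℤ),
      LW0 (wmode a n w) - wmode a n (LW0 w)
    = wmode (∑ᶠ m : ℤ, (m : ℂ) • VA.proj m a) n w + (-(n : ℂ) - 1) • wmode a n w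
  /-- `L_W(-1)`-derivative formula: `Y_W(L(-1)u, x) = (d/dx) Y_W(u,x)` -/
  LW1_deriv : ∀ (u : V) (w : W) (n : ℤ),
      wmode (VA.mode u (-2) VA.one) n w = (-(n : ℂ)) • wmode u (n - 1) w
  /-- `L_W(-1)`-bracket formula -/
  LW1_bracket : ∀ (u : V) (w : W) (n : ℤ),
      LW1 (wmode u n w) - wmode u n (LW1 w) = wmode (VA.mode u (-2) VA.one) n w

namespace LBGModule

variable {V : Type} [AddCommGroup V] [Module ℂ V] {VA : GRVertexAlgebra V}
variable {W : Type} [AddCommGroup W] [Module ℂ W]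

lemma wmode_zero_left (M : LBGModule VA W) (n : ℤ) (w : W) : M.wmode 0 n w = 0 := by
  simpa using M.wmode_smul_left 0 0 n w

lemma wmode_zero_right (M : LBGModule VA W) (u : V) (n : ℤ) : M.wmode u n 0 = 0 := by
  simpa using M.wmode_smul_right u n 0 0

/-- `Ω_n(W) = {w ∈ W : v_k w = 0 for homogeneous v with wt v - k - 1 < -n}`
(for `n < 0` this is automatically `{0}`, matching `Ω_{-1}(W) = 0`). -/
def OmegaSet (M : LBGModule VA W) (n : ℤ) : Set W :=
  {w : W | ∀ (m k : ℤ) (v : V), m - k - 1 < -n → M.wmode (VA.proj m v) k w = 0}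

/-- `ϑ_{Gr(W)}([v]_{kl})` applied to a representative `w`:
`Res_x x^{l-k-1} Y_W(x^{L(0)} v, x) w`. -/
def wAct (M : LBGModule VA W) (v : V) (k l : ℕ) (w : W) : W :=
  ∑ᶠ m : ℤ, M.wmode (VA.proj m v) ((l : ℤ) - (k : ℤ) - 1 + m) w

end LBGModule

namespace GRVertexAlgebra

variable {V : Type} [AddCommGroup V] [Module ℂ V]

/-- Membership in `Q^∞(V)`: `A` acts as zero on `Gr(W)` for every lower-bounded
generalized `V`-module `W`.  Here the action of `A` on `[w]_n ∈ Gr_n(W)` has component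
`[ϑ([A_{kn}]_{kn}) w]_k` in `Gr_k(W)`, which vanishes in `Gr_k(W) = Ω_k(W)/Ω_{k-1}(W)`
exactly when the representative lies in `Ω_{k-1}(W)`. -/
def memQ (VA : GRVertexAlgebra V) (A : UInf V) : Prop :=
  ∀ (W : Type) (_ : AddCommGroup W) (_ : Module ℂ W) (M : LBGModule VA W)
    (n k : ℕ) (w : W), w ∈ M.OmegaSet n →
      M.wAct (A.1 k n) k n w ∈ M.OmegaSet ((k : ℤ) - 1)

/-- The generators of `O^∞_∘(V)` living in position `(k,l)`:
`Res_x x^{-k-l-p-2} (1+x)^l Y((1+x)^{L(0)} u, x) v`. -/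
def circExpr (VA : GRVertexAlgebra V) (u v : V) (k l p : ℕ) : V :=
  VA.resPow (-(k : ℤ) - l - p - 2) l u v

/-- Membership in `O^∞_∘(V)`: each entry of `A` is a (finite) linear combination of the
generators `Res_x x^{-k-l-p-2} (1+x)^l [Y((1+x)^{L(0)} u, x) v]_{kl}`; since each generator
is concentrated in a single position `(k,l)`, an infinite linear combination in which each
pair `(k,l)` appears only finitely many times is exactly a column-finite matrix each of whose
entries lies in the corresponding span. -/
def memOcirc (VA : GRVertexAlgebra V) (A : UInf V) : Prop :=
  ∀ k l : ℕ, A.1 k l ∈ Submodule.span ℂ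
    {x : V | ∃ (u v : V) (p : ℕ), x = VA.circExpr u v k l p}

/-- The element `(L(-1) + L(0) + l - k) v`. -/
def LLExpr (VA : GRVertexAlgebra V) (k l : ℕ) (v : V) : V :=
  VA.Lneg1op v + VA.L0op v + (((l : ℂ) - (k : ℂ)) • v)

/-- Membership in `O^∞(V)`. -/
def memO (VA : GRVertexAlgebra V) (A : UInf V) : Prop :=
  ∀ k l : ℕ, A.1 k l ∈ Submodule.span ℂ
    ({x : V | ∃ (u v : V) (p : ℕ), x = VA.circExpr u v k l p}
      ∪ {x : V | ∃ v : V, x = VA.LLExpr k l v})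

end GRVertexAlgebra
namespace GRVertexAlgebra

variable {V : Type} [AddCommGroup V] [Module ℂ V]

/-- Huang's Jacobi-identity element of `U^∞(V)` attached to `u, v ∈ V` with `v`
homogeneous of weight `wtv`, and integers `k ∈ ℕ`, `l, p, n ∈ ℤ` with `l + p ∈ ℕ`:
`∑_{j, n+p-j ≥ 0} (-1)^j C(p,j) [v]_{k,n+p-j} ⋄ [u]_{n+p-j,l+p}`
`- ∑_{j, l-n+k+p-j ≥ 0} (-1)^{p-j} C(p,j) [u]_{k,l-n+k+p-j} ⋄ [v]_{l-n+k+p-j,l+p}`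
`- ∑_{j ∈ ℕ} C(wt v + n - k - 1, j) [v_{p+j} u]_{k,l+p}`. -/
def jElt (VA : GRVertexAlgebra V) (u v : V) (wtv : ℤ) (k : ℕ) (l p n : ℤ) : UInf V :=
  (∑ᶠ j : ℕ, if (j : ℤ) ≤ n + p then
      ((-1 : ℂ) ^ (j : ℕ) * cchoose p j) •
        VA.udiamond (Usingle v k (n + p - j).toNat)
          (Usingle u (n + p - j).toNat (l + p).toNat)
    else 0)
  - (∑ᶠ j : ℕ, if (j : ℤ) ≤ l - n + (k : ℤ) + p then
      ((-1 : ℂ) ^ ((p : ℤ) - (j : ℤ)) * cchoose p j) •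
        VA.udiamond (Usingle u k (l - n + (k : ℤ) + p - j).toNat)
          (Usingle v (l - n + (k : ℤ) + p - j).toNat (l + p).toNat)
    else 0)
  - Usingle (∑ᶠ j : ℕ, cchoose (wtv + n - (k : ℤ) - 1) j • VA.mode v (p + j) u)
      k (l + p).toNat

/-- The `(k, l+p)` entry of the Jacobi-identity element `jElt`, written out in terms of
residues as in the paper. -/
def jEntry (VA : GRVertexAlgebra V) (u v : V) (wtv : ℤ) (k : ℕ) (l p n : ℤ) : V :=
  (∑ᶠ j : ℕ, if (j : ℤ) ≤ n + p then
      ((-1 : ℂ) ^ (j : ℕ) * cchoose p j) •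
        VA.diamondEntry v u k (n + p - j).toNat (l + p).toNat
    else 0)
  - (∑ᶠ j : ℕ, if (j : ℤ) ≤ l - n + (k : ℤ) + p then
      ((-1 : ℂ) ^ ((p : ℤ) - (j : ℤ)) * cchoose p j) •
        VA.diamondEntry u v k (l - n + (k : ℤ) + p - j).toNat (l + p).toNat
    else 0)
  - (∑ᶠ j : ℕ, cchoose (wtv + n - (k : ℤ) - 1) j • VA.mode v (p + j) u)

/-- The set of generating elements of `J^∞(V)`. -/
def JSet (VA : GRVertexAlgebra V) : Set (UInf V) :=
  {A : UInf V | ∃ (u v : V) (wtv : ℤ) (k : ℕ) (l p n : ℤ),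
    VA.proj wtv v = v ∧ 0 ≤ l + p ∧ A = VA.jElt u v wtv k l p n}

/-- The set `O^∞(V)` of Huang, as a subset of `U^∞(V)`. -/
def OSet (VA : GRVertexAlgebra V) : Set (UInf V) := {A : UInf V | VA.memO A}

end GRVertexAlgebra

/-- A vertex operator algebra: a grading-restricted vertex algebra together with a
conformal vector `ω` whose modes `L(n) = ω_{n+1}` give a representation of the Virasoro
algebra, recover the grading operator `L(0)`, and satisfy the `L(-1)`-property. -/
structure VertexOperatorAlgebra (V : Type) [AddCommGroup V] [Module ℂ V]
    extends GRVertexAlgebra V : Type where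
  /-- the conformal vector -/
  omega : V
  /-- the central charge -/
  centralCharge : ℂ
  /-- the Virasoro relations for `L(n) = ω_{n+1}` -/
  virasoro : ∀ (m n : ℤ) (v : V),
      mode omega (m + 1) (mode omega (n + 1) v) - mode omega (n + 1) (mode omega (m + 1) v)
    = ((m : ℂ) - (n : ℂ)) • mode omega (m + n + 1) v
      + (if m + n = 0 then (((m ^ 3 - m : ℤ) : ℂ) / 12) * centralCharge else 0) • v
  /-- `L(0) = ω_1` is the grading operator -/
  omega_L0 : ∀ v : V, mode omega 1 v = ∑ᶠ m : ℤ, (m : ℂ) • proj m v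
  /-- `L(-1) = ω_0` -/
  omega_Lneg1 : ∀ v : V, mode omega 0 v = mode v (-2) one

namespace GRVertexAlgebra

variable {V : Type} [AddCommGroup V] [Module ℂ V]

/-- The circle product `u ∘_n v = Res_x (1+x)^{wt u + n} Y(u,x) v / x^{2n+2}`
(for `u` homogeneous; `resPow` inserts the weight of each homogeneous component). -/
def circN (VA : GRVertexAlgebra V) (n : ℕ) (u v : V) : V :=
  VA.resPow (-(2 * (n : ℤ)) - 2) n u v

/-- The subspace `O_n(V)`, spanned by the `u ∘_n v` for homogeneous `u` and all `v`, and
by the `(L(-1) + L(0)) v`. -/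
def ZhuO (VA : GRVertexAlgebra V) (n : ℕ) : Submodule ℂ V :=
  Submodule.span ℂ
    ({x : V | ∃ u v : V, VA.Homogeneous u ∧ x = VA.circN n u v}
      ∪ {x : V | ∃ v : V, x = VA.Lneg1op v + VA.L0op v})

/-- The product `u *_n v` of Dong–Li–Mason (for `u` homogeneous, extended linearly):
`∑_{m=0}^{n} (-1)^m C(m+n, n) Res_x (1+x)^{wt u + n} Y(u,x) v / x^{n+m+1}`. -/
def starN (VA : GRVertexAlgebra V) (n : ℕ) (u v : V) : V :=
  ∑ m ∈ Finset.range (n + 1),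
    ((-1 : ℂ) ^ (m : ℕ) * ((m + n).choose n : ℂ)) •
      VA.resPow (-(n : ℤ) - m - 1) n u v

end GRVertexAlgebra

/-- The monomial `α(-i_1) ⋯ α(-i_j) 𝟙` of the rank one Heisenberg vertex operator algebra,
indexed by the multiset `{i_1, …, i_j}` of positive integers; here `a = α(-1)𝟙` so that
`α(m) = a_m`. -/
def heisMono {V : Type} [AddCommGroup V] [Module ℂ V]
    (VA : GRVertexAlgebra V) (a : V) (μ : Multiset ℕ+) : V :=
  (μ.sort (· ≤ ·)).foldr (fun i v => VA.mode a (-(i : ℤ)) v) VA.one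

/-- The rank one Heisenberg vertex operator algebra `M(1)`: a vertex operator algebra
with a weight-one element `a = α(-1)𝟙` whose modes `α(m) = a_m` satisfy the rank one
Heisenberg relations (with the central element acting as `1`), such that the monomials
`α(-i_1) ⋯ α(-i_j) 𝟙` form a basis, and with conformal vector `ω = (1/2) α(-1)² 𝟙`
of central charge `1`. -/
structure HeisenbergVOA (V : Type) [AddCommGroup V] [Module ℂ V]
    extends VertexOperatorAlgebra V : Type where
  /-- the element `a = α(-1)𝟙` -/
  a : V
  /-- `α(-1)𝟙` is homogeneous of weight one -/
  a_wt : proj 1 a = a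
  /-- the Heisenberg commutation relations `[α(m), α(n)] = m δ_{m+n,0}` (`c` acts as `1`) -/
  heis_comm : ∀ (m n : ℤ) (v : V),
      mode a m (mode a n v) - mode a n (mode a m v)
    = if m + n = 0 then (m : ℂ) • v else 0
  /-- `M(1) ≃ S(ĥ⁻)` linearly: the monomials `α(-i_1)⋯α(-i_j)𝟙` form a basis -/
  basis : Module.Basis (Multiset ℕ+) ℂ V
  basis_eq : ∀ μ : Multiset ℕ+, basis μ = heisMono toGRVertexAlgebra a μ
  omega_eq : omega = (1 / 2 : ℂ) • mode a (-1) a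
  centralCharge_eq : centralCharge = 1

namespace HeisenbergVOA

variable {V : Type} [AddCommGroup V] [Module ℂ V]

/-- The element
`D_n = [α(-1)𝟙]_{nn} ⋄ [α(-1)𝟙]_{nn} - [α(-1)²𝟙]_{nn} + 2n [𝟙]_{nn}` of `U^∞(M(1))`. -/
def Delt (H : HeisenbergVOA V) (n : ℕ) : UInf V :=
  H.udiamond (GRVertexAlgebra.Usingle H.a n n) (GRVertexAlgebra.Usingle H.a n n)
    - GRVertexAlgebra.Usingle (H.mode H.a (-1) H.a) n n
    + (2 * (n : ℂ)) • GRVertexAlgebra.Usingle H.one n n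

end HeisenbergVOA

namespace LBGModule

variable {V : Type} [AddCommGroup V] [Module ℂ V]
variable {W : Type} [AddCommGroup W] [Module ℂ W]

/-- `Ω(W) = {w ∈ W : α(n) w = 0 for all n > 0}` for a module `W` over the rank one
Heisenberg vertex operator algebra. -/
def smallOmega (H : HeisenbergVOA V) (M : LBGModule H.toGRVertexAlgebra W) :
    Submodule ℂ W where
  carrier := {w : W | ∀ n : ℤ, 0 < n → M.wmode H.a n w = 0}
  add_mem' := by
    intro w w' hw hw' n hn
    rw [M.wmode_add_right, hw n hn, hw' n hn, add_zero]
  zero_mem' := fun n _ => M.wmode_zero_right H.a n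
  smul_mem' := by
    intro c w hw n hn
    rw [M.wmode_smul_right, hw n hn, smul_zero]

end LBGModule

/- ===================== Auxiliary development for the main theorem ===================== -/

section HuangAux

open Function

lemma cchoose_zero' (q : ℤ) : cchoose q 0 = 1 := by simp [cchoose]

lemma cchoose_mul' (q : ℤ) (m i : ℕ) :
    cchoose q m * cchoose (q - m) i = cchoose q (m+i) * ((m+i).choose m : ℂ) := by
  unfold cchoose
  have hprod : (∏ t ∈ Finset.range (m+i), ((q:ℂ) - t))
      = (∏ t ∈ Finset.range m, ((q:ℂ) - t)) * ∏ t ∈ Finset.range i, (((q - m : ℤ):ℂ) - t) := by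
    rw [Finset.prod_range_add]
    refine congrArg _ (Finset.prod_congr rfl fun t _ => ?_)
    push_cast; ring
  have hc : ((m+i).choose m : ℂ) * (m.factorial : ℂ) * (i.factorial : ℂ)
      = ((m+i).factorial : ℂ) := by
    have h := Nat.choose_mul_factorial_mul_factorial (Nat.le_add_right m i)
    have h2 : m + i - m = i := by omega
    rw [h2] at h
    exact_mod_cast h
  have hm : (m.factorial : ℂ) ≠ 0 := Nat.cast_ne_zero.mpr (Nat.factorial_ne_zero m)
  have hi : (i.factorial : ℂ) ≠ 0 := Nat.cast_ne_zero.mpr (Nat.factorial_ne_zero i)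
  have hmi : ((m+i).factorial : ℂ) ≠ 0 := Nat.cast_ne_zero.mpr (Nat.factorial_ne_zero _)
  field_simp
  rw [hprod, ← hc]
  push_cast
  ring

lemma sum_sign_choose (s : ℕ) :
    ∑ m ∈ Finset.range (s+1), (-1:ℂ)^(s-m) * (s.choose m : ℂ) = if s = 0 then 1 else 0 := by
  have h := add_pow (1:ℂ) (-1) s
  simp only [one_pow, one_mul, add_neg_cancel] at h
  rcases Nat.eq_zero_or_pos s with rfl | hs
  · simp
  · rw [if_neg (Nat.pos_iff_ne_zero.mp hs), ← h, zero_pow (Nat.pos_iff_ne_zero.mp hs)]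

lemma finite_int_le (c : ℤ) : {j : ℕ | (j:ℤ) ≤ c}.Finite := by
  refine Set.Finite.subset (Set.finite_Iic c.toNat) ?_
  intro j hj
  simp only [Set.mem_setOf_eq] at hj
  simp only [Set.mem_Iic]
  omega

lemma support_ite_le {α : Type*} [Zero α] (c : ℤ) (f : ℕ → α) :
    (Function.support fun j : ℕ => if (j:ℤ) ≤ c then f j else 0) ⊆ {j : ℕ | (j:ℤ) ≤ c} := by
  intro j hj
  simp only [Function.mem_support] at hj
  by_contra h
  simp only [Set.mem_setOf_eq] at h
  exact hj (if_neg h)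

lemma neg_one_zpow_sub_eq_add (p : ℤ) (j : ℕ) : (-1:ℂ)^(p - (j:ℤ)) = (-1:ℂ)^(p + (j:ℤ)) := by
  have h : p + (j:ℤ) = (p - j) + 2*(j:ℤ) := by ring
  rw [h, zpow_add₀ (by norm_num : (-1:ℂ) ≠ 0)]
  have h2 : (-1:ℂ)^(2*(j:ℤ)) = 1 := by
    rw [zpow_mul]
    norm_num
  rw [h2, mul_one]

lemma comb_collapse {W : Type*} [AddCommGroup W] [Module ℂ W] (q : ℤ) (N : ℕ) (T : ℕ → W)
    (hT : ∀ s, N < s → T s = 0) :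
    ∑ m ∈ Finset.range (N+1), ∑ i ∈ Finset.range (N+1),
      (cchoose q m * ((-1:ℂ)^i * cchoose (q - m) i)) • T (m+i) = T 0 := by
  classical
  have hco : ∀ m i : ℕ, cchoose q m * ((-1:ℂ)^i * cchoose (q - m) i)
      = (-1:ℂ)^i * (((m+i).choose m : ℂ) * cchoose q (m+i)) := by
    intro m i
    have h := cchoose_mul' q m i
    calc cchoose q m * ((-1:ℂ)^i * cchoose (q - m) i)
        = (-1:ℂ)^i * (cchoose q m * cchoose (q-m) i) := by ring
      _ = (-1:ℂ)^i * (((m+i).choose m : ℂ) * cchoose q (m+i)) := by rw [h]; ring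
  rw [← Finset.sum_product']
  set P := Finset.range (N+1) ×ˢ Finset.range (N+1) with hP
  set f : ℕ × ℕ → W := fun p =>
    (cchoose q p.1 * ((-1:ℂ)^p.2 * cchoose (q - p.1) p.2)) • T (p.1+p.2) with hf
  have h1 : ∑ p ∈ P, f p = ∑ p ∈ P.filter (fun p => p.1 + p.2 ≤ N), f p := by
    refine (Finset.sum_subset (Finset.filter_subset _ _) ?_).symm
    intro p hp hnp
    simp only [Finset.mem_filter, hp, true_and, not_le] at hnp
    simp [hf, hT _ hnp]
  have h2 : ∑ p ∈ P.filter (fun p => p.1 + p.2 ≤ N), f p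
      = ∑ r ∈ P.filter (fun r => r.2 ≤ r.1),
          ((-1:ℂ)^(r.1 - r.2) * ((r.1.choose r.2 : ℂ) * cchoose q r.1)) • T r.1 := by
    refine Finset.sum_nbij' (fun p => (p.1 + p.2, p.1)) (fun r => (r.2, r.1 - r.2)) ?_ ?_ ?_ ?_ ?_
    · intro p hp
      simp only [hP, Finset.mem_filter, Finset.mem_product, Finset.mem_range] at hp ⊢
      omega
    · intro r hr
      simp only [hP, Finset.mem_filter, Finset.mem_product, Finset.mem_range] at hr ⊢
      omega
    · rintro ⟨a, b⟩ hp
      simp only [hP, Finset.mem_filter, Finset.mem_product, Finset.mem_range] at hp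
      simp only [Prod.mk.injEq, and_true, true_and]
      omega
    · rintro ⟨a, b⟩ hr
      simp only [hP, Finset.mem_filter, Finset.mem_product, Finset.mem_range] at hr
      simp only [Prod.mk.injEq, and_true, true_and]
      omega
    · rintro ⟨a, b⟩ hp
      simp only [hf, hco a b, Nat.add_sub_cancel_left]
  rw [h1, h2]
  rw [Finset.sum_filter, Finset.sum_product]
  have h3 : ∀ s ∈ Finset.range (N+1),
      (∑ m ∈ Finset.range (N+1), if m ≤ s then
        ((-1:ℂ)^(s - m) * ((s.choose m : ℂ) * cchoose q s)) • T s else 0)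
      = (if s = 0 then (1:ℂ) else 0) • (cchoose q s • T s) := by
    intro s hs
    simp only [Finset.mem_range] at hs
    rw [← Finset.sum_filter]
    have hr : (Finset.range (N+1)).filter (fun m => m ≤ s) = Finset.range (s+1) := by
      ext m
      simp only [Finset.mem_filter, Finset.mem_range]
      omega
    rw [hr]
    rw [← sum_sign_choose s, Finset.sum_smul]
    refine Finset.sum_congr rfl fun m _ => ?_
    rw [smul_smul]
    ring_nf
  rw [Finset.sum_congr rfl h3]
  rw [Finset.sum_eq_single 0]
  · simp [cchoose_zero']
  · intro s _ hs
    simp [hs]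
  · intro h
    simp at h

variable {V : Type} [AddCommGroup V] [Module ℂ V]

namespace GRVertexAlgebra

variable (VA : GRVertexAlgebra V)

lemma proj_homog {d : ℤ} {a : V} (ha : VA.proj d a = a) (m : ℤ) :
    VA.proj m a = if m = d then a else 0 := by
  conv_lhs => rw [← ha]
  rw [VA.proj_idem, ha]

lemma support_mode_nat (a b : V) (N₀ : ℤ) :
    (Function.support fun i : ℕ => VA.mode a (N₀ + i) b).Finite := by
  obtain ⟨Nt, hNt⟩ := VA.lower_trunc a b
  refine Set.Finite.subset (finite_int_le (Nt - N₀)) ?_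
  intro i hi
  simp only [Function.mem_support] at hi
  simp only [Set.mem_setOf_eq]
  by_contra hc
  push_neg at hc
  exact hi (hNt _ (by omega))

lemma L0op_homog {d : ℤ} {a : V} (ha : VA.proj d a = a) :
    (∑ᶠ m : ℤ, (m:ℂ) • VA.proj m a) = (d:ℂ) • a := by
  rw [finsum_eq_single _ d (fun m hm => by rw [VA.proj_homog ha, if_neg hm, smul_zero]), ha]

lemma proj_L0op (q : ℤ) (x : V) :
    VA.proj q (∑ᶠ m : ℤ, (m:ℂ) • VA.proj m x) = (q:ℂ) • VA.proj q x := by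
  have hfin : (Function.support fun m : ℤ => (m:ℂ) • VA.proj m x).Finite := by
    refine Set.Finite.subset (VA.proj_support_finite x) ?_
    intro m hm
    simp only [Function.mem_support] at hm ⊢
    intro h; exact hm (by rw [h, smul_zero])
  have hmap := (VA.proj q).toAddMonoidHom.map_finsum hfin
  simp only [LinearMap.toAddMonoidHom_coe] at hmap
  rw [hmap]
  rw [finsum_eq_single _ q (fun m hm => by
    show VA.proj q ((m:ℂ) • VA.proj m x) = 0
    rw [map_smul, VA.proj_idem, if_neg (fun h => hm h.symm), smul_zero])]
  show VA.proj q ((q:ℂ) • VA.proj q x) = _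
  rw [map_smul, VA.proj_idem, if_pos rfl]

lemma eigen_proj {c : ℤ} {x : V} (hx : (∑ᶠ m : ℤ, (m:ℂ) • VA.proj m x) = (c:ℂ) • x) :
    VA.proj c x = x := by
  have hq : ∀ q : ℤ, q ≠ c → VA.proj q x = 0 := by
    intro q hqc
    have h1 := VA.proj_L0op q x
    rw [hx, map_smul] at h1
    have h2 : ((q:ℂ) - c) • VA.proj q x = 0 := by
      rw [sub_smul, ← h1, sub_self]
    rcases smul_eq_zero.mp h2 with h | h
    · exfalso
      apply hqc
      have : (q:ℂ) = (c:ℂ) := by linear_combination h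
      exact_mod_cast this
    · exact h
  have h3 := finsum_eq_single (fun m => VA.proj m x) c hq
  rw [VA.proj_sum x] at h3
  exact h3.symm

lemma mode_wt {da db : ℤ} {a b : V} (ha : VA.proj da a = a) (hb : VA.proj db b = b) (t : ℤ) :
    VA.proj (da + db - t - 1) (VA.mode a t b) = VA.mode a t b := by
  apply VA.eigen_proj
  have hbr := VA.L0_bracket a b t
  rw [VA.L0op_homog ha, VA.L0op_homog hb, VA.mode_smul_right, VA.mode_smul_left] at hbr
  have h4 : (∑ᶠ m : ℤ, (m:ℂ) • VA.proj m (VA.mode a t b))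
      = (da:ℂ) • VA.mode a t b + (-(t:ℂ) - 1) • VA.mode a t b + (db:ℂ) • VA.mode a t b :=
    sub_eq_iff_eq_add.mp hbr
  rw [h4]
  push_cast
  module

lemma resPow_homog {d : ℤ} {a : V} (ha : VA.proj d a = a) (N l : ℤ) (b : V) :
    VA.resPow N l a b = ∑ᶠ i : ℕ, cchoose (l + d) i • VA.mode a (N + i) b := by
  unfold GRVertexAlgebra.resPow
  rw [finsum_eq_single _ d (fun m hm => ?_), ha]
  have h : ∀ i : ℕ, cchoose (l + m) i • VA.mode (VA.proj m a) (N + i) b = 0 := by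
    intro i
    rw [VA.proj_homog ha, if_neg hm, VA.mode_zero_left, smul_zero]
  simp only [h]
  exact finsum_zero

lemma smul_mode_support (a b : V) (N : ℤ) (c : ℕ → ℂ) (e : ℕ → ℤ)
    (he : ∀ i : ℕ, e i = N + i) :
    (Function.support fun i : ℕ => c i • VA.mode a (e i) b).Finite := by
  refine Set.Finite.subset (VA.support_mode_nat a b N) ?_
  intro i hi
  simp only [Function.mem_support] at hi ⊢
  intro hh
  apply hi
  rw [he i, hh, smul_zero]

lemma inner_support (a x : V) (N l : ℤ) :
    (Function.support fun m : ℤ =>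
        ∑ᶠ i : ℕ, cchoose (l + m) i • VA.mode (VA.proj m a) (N + i) x)
      ⊆ Function.support fun m => VA.proj m a := by
  intro m hm
  simp only [Function.mem_support] at hm ⊢
  intro h
  apply hm
  have h1 : ∀ i : ℕ, cchoose (l+m) i • VA.mode (VA.proj m a) (N+i) x = 0 := by
    intro i; rw [h, VA.mode_zero_left, smul_zero]
  simp only [h1]
  exact finsum_zero

lemma resPow_add_right (N l : ℤ) (a x y : V) :
    VA.resPow N l a (x + y) = VA.resPow N l a x + VA.resPow N l a y := by
  unfold GRVertexAlgebra.resPow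
  have h : ∀ m : ℤ, (∑ᶠ i : ℕ, cchoose (l+m) i • VA.mode (VA.proj m a) (N+i) (x+y))
      = (∑ᶠ i : ℕ, cchoose (l+m) i • VA.mode (VA.proj m a) (N+i) x)
        + (∑ᶠ i : ℕ, cchoose (l+m) i • VA.mode (VA.proj m a) (N+i) y) := by
    intro m
    have h1 : ∀ i : ℕ, cchoose (l+m) i • VA.mode (VA.proj m a) (N+i) (x+y)
        = cchoose (l+m) i • VA.mode (VA.proj m a) (N+i) x
          + cchoose (l+m) i • VA.mode (VA.proj m a) (N+i) y := by
      intro i; rw [VA.mode_add_right, smul_add]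
    rw [finsum_congr h1]
    exact finsum_add_distrib
      (VA.smul_mode_support (VA.proj m a) x N _ _ (fun i => rfl))
      (VA.smul_mode_support (VA.proj m a) y N _ _ (fun i => rfl))
  rw [finsum_congr h]
  exact finsum_add_distrib
    (Set.Finite.subset (VA.proj_support_finite a) (VA.inner_support a x N l))
    (Set.Finite.subset (VA.proj_support_finite a) (VA.inner_support a y N l))

lemma resPow_add_left (N l : ℤ) (a a' x : V) :
    VA.resPow N l (a + a') x = VA.resPow N l a x + VA.resPow N l a' x := by
  unfold GRVertexAlgebra.resPow
  have h : ∀ m : ℤ, (∑ᶠ i : ℕ, cchoose (l+m) i • VA.mode (VA.proj m (a+a')) (N+i) x)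
      = (∑ᶠ i : ℕ, cchoose (l+m) i • VA.mode (VA.proj m a) (N+i) x)
        + (∑ᶠ i : ℕ, cchoose (l+m) i • VA.mode (VA.proj m a') (N+i) x) := by
    intro m
    have h1 : ∀ i : ℕ, cchoose (l+m) i • VA.mode (VA.proj m (a+a')) (N+i) x
        = cchoose (l+m) i • VA.mode (VA.proj m a) (N+i) x
          + cchoose (l+m) i • VA.mode (VA.proj m a') (N+i) x := by
      intro i; rw [map_add, VA.mode_add_left, smul_add]
    rw [finsum_congr h1]
    exact finsum_add_distrib
      (VA.smul_mode_support (VA.proj m a) x N _ _ (fun i => rfl))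
      (VA.smul_mode_support (VA.proj m a') x N _ _ (fun i => rfl))
  rw [finsum_congr h]
  exact finsum_add_distrib
    (Set.Finite.subset (VA.proj_support_finite a) (VA.inner_support a x N l))
    (Set.Finite.subset (VA.proj_support_finite a') (VA.inner_support a' x N l))

lemma diamondEntry_add_right (a x y : V) (k n l : ℕ) :
    VA.diamondEntry a (x+y) k n l = VA.diamondEntry a x k n l + VA.diamondEntry a y k n l := by
  unfold GRVertexAlgebra.diamondEntry
  rw [← Finset.sum_add_distrib]
  exact Finset.sum_congr rfl fun m _ => by rw [VA.resPow_add_right, smul_add]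

lemma diamondEntry_add_left (a a' x : V) (k n l : ℕ) :
    VA.diamondEntry (a+a') x k n l = VA.diamondEntry a x k n l + VA.diamondEntry a' x k n l := by
  unfold GRVertexAlgebra.diamondEntry
  rw [← Finset.sum_add_distrib]
  exact Finset.sum_congr rfl fun m _ => by rw [VA.resPow_add_left, smul_add]

end GRVertexAlgebra

namespace LBGModule

variable {VA : GRVertexAlgebra V} {W : Type} [AddCommGroup W] [Module ℂ W]
variable (M : LBGModule VA W)

lemma zero_mem_OmegaSet (t : ℤ) : (0:W) ∈ M.OmegaSet t :=
  fun m k v _ => M.wmode_zero_right (VA.proj m v) k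

lemma omega_vanish {t : ℤ} {w : W} (hw : w ∈ M.OmegaSet t) {d : ℤ} {a : V}
    (ha : VA.proj d a = a) {s : ℤ} (hs : d - s - 1 < -t) : M.wmode a s w = 0 := by
  have h := hw d s a hs
  rwa [ha] at h

lemma support_wmode_nat (a : V) (w : W) (N₀ : ℤ) :
    (Function.support fun i : ℕ => M.wmode a (N₀ + i) w).Finite := by
  obtain ⟨Nt, hNt⟩ := M.lower_trunc a w
  refine Set.Finite.subset (finite_int_le (Nt - N₀)) ?_
  intro i hi
  simp only [Function.mem_support] at hi
  simp only [Set.mem_setOf_eq]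
  by_contra hc
  push_neg at hc
  exact hi (hNt _ (by omega))

lemma support_wAct_core (a : V) (e : ℤ → ℤ) (w : W) :
    (Function.support fun m : ℤ => M.wmode (VA.proj m a) (e m) w) ⊆
      Function.support fun m => VA.proj m a := by
  intro m hm
  simp only [Function.mem_support] at hm ⊢
  intro h
  exact hm (by rw [h, M.wmode_zero_left])

/-- `ϑ_{Gr(W)}([·]_{kl})` applied to `w`, as a linear map in the vertex-algebra element. -/
def wActL (k l : ℕ) (w : W) : V →ₗ[ℂ] W where
  toFun a := M.wAct a k l w
  map_add' a b := by
    show (∑ᶠ m : ℤ, M.wmode (VA.proj m (a+b)) ((l:ℤ) - (k:ℤ) - 1 + m) w)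
      = (∑ᶠ m : ℤ, M.wmode (VA.proj m a) ((l:ℤ) - (k:ℤ) - 1 + m) w)
        + (∑ᶠ m : ℤ, M.wmode (VA.proj m b) ((l:ℤ) - (k:ℤ) - 1 + m) w)
    have h : ∀ m : ℤ, M.wmode (VA.proj m (a+b)) ((l:ℤ) - (k:ℤ) - 1 + m) w
        = M.wmode (VA.proj m a) ((l:ℤ) - (k:ℤ) - 1 + m) w
          + M.wmode (VA.proj m b) ((l:ℤ) - (k:ℤ) - 1 + m) w := by
      intro m; rw [map_add, M.wmode_add_left]
    rw [finsum_congr h]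
    exact finsum_add_distrib
      (Set.Finite.subset (VA.proj_support_finite a) (M.support_wAct_core a _ w))
      (Set.Finite.subset (VA.proj_support_finite b) (M.support_wAct_core b _ w))
  map_smul' c a := by
    show (∑ᶠ m : ℤ, M.wmode (VA.proj m (c • a)) ((l:ℤ) - (k:ℤ) - 1 + m) w)
      = c • (∑ᶠ m : ℤ, M.wmode (VA.proj m a) ((l:ℤ) - (k:ℤ) - 1 + m) w)
    have h : ∀ m : ℤ, M.wmode (VA.proj m (c • a)) ((l:ℤ) - (k:ℤ) - 1 + m) w
        = c • M.wmode (VA.proj m a) ((l:ℤ) - (k:ℤ) - 1 + m) w := by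
      intro m; rw [map_smul, M.wmode_smul_left]
    rw [finsum_congr h]
    exact (smul_finsum' c
      (Set.Finite.subset (VA.proj_support_finite a) (M.support_wAct_core a _ w))).symm

lemma wActL_homog {d : ℤ} {a : V} (ha : VA.proj d a = a) (k l : ℕ) (w : W) :
    M.wActL k l w a = M.wmode a ((l:ℤ) - (k:ℤ) - 1 + d) w := by
  show M.wAct a k l w = _
  unfold LBGModule.wAct
  rw [finsum_eq_single _ d (fun m hm => by
    rw [VA.proj_homog ha m, if_neg hm, M.wmode_zero_left]), ha]

lemma chi_diamond {da db : ℤ} {a b : V} (ha : VA.proj da a = a) (hb : VA.proj db b = b)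
    (k N L : ℕ) {w : W} (hw : w ∈ M.OmegaSet (L:ℤ)) :
    M.wActL k L w (VA.diamondEntry a b k N L)
      = M.wmode a ((da:ℤ) - (k:ℤ) + N - 1) (M.wmode b ((db:ℤ) + (L:ℤ) - N - 1) w) := by
  classical
  set χ := M.wActL k L w with hχ
  set q : ℤ := -(k:ℤ) + N - L - 1 with hq
  set T : ℕ → W := fun s =>
    M.wmode a ((da:ℤ) - (k:ℤ) + N - 1 - s) (M.wmode b ((db:ℤ) + (L:ℤ) - N - 1 + s) w) with hT
  have hTvan : ∀ s : ℕ, N < s → T s = 0 := by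
    intro s hs
    rw [hT]
    simp only
    rw [M.omega_vanish hw hb (by push_cast; omega), M.wmode_zero_right]
  have hres : ∀ m' : ℕ, χ (VA.resPow (q - m') L a b)
      = ∑ᶠ i : ℕ, ((-1:ℂ)^i * cchoose (q - m') i) • T (m' + i) := by
    intro m'
    rw [VA.resPow_homog ha]
    have hsup : (Function.support fun i : ℕ =>
        cchoose ((L:ℤ) + da) i • VA.mode a (q - m' + i) b).Finite :=
      VA.smul_mode_support a b (q - m') _ _ (fun i => rfl)
    have hmap := χ.toAddMonoidHom.map_finsum hsup
    simp only [LinearMap.toAddMonoidHom_coe] at hmap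
    rw [hmap]
    have h1 : ∀ i : ℕ, χ (cchoose ((L:ℤ) + da) i • VA.mode a (q - m' + i) b)
        = cchoose ((L:ℤ) + da) i • M.wmode (VA.mode a (q - m' + i) b)
            ((L:ℤ) + da + ((L:ℤ) - N - 1 + m' + db) - i) w := by
      intro i
      rw [map_smul, M.wActL_homog (VA.mode_wt ha hb (q - m' + i)) k L w]
      congr 2
      push_cast
      ring
    rw [finsum_congr h1]
    have hjac := M.jacobi a b w (q - m') ((L:ℤ) + da) ((L:ℤ) - N - 1 + m' + db)
    rw [hjac]
    have h2 : (∑ᶠ i : ℕ, ((-1:ℂ)^((q - m') + (i:ℤ)) * cchoose (q - m') i) •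
        M.wmode b (((L:ℤ) - N - 1 + m' + db) + (q - m') - i)
          (M.wmode a (((L:ℤ) + da) + i) w)) = 0 := by
      have h3 : ∀ i : ℕ, ((-1:ℂ)^((q - m') + (i:ℤ)) * cchoose (q - m') i) •
          M.wmode b (((L:ℤ) - N - 1 + m' + db) + (q - m') - i)
            (M.wmode a (((L:ℤ) + da) + i) w) = 0 := by
        intro i
        rw [M.omega_vanish hw ha (by push_cast; omega), M.wmode_zero_right, smul_zero]
      simp only [h3]
      exact finsum_zero
    rw [h2, sub_zero]
    refine finsum_congr fun i => ?_
    have e1 : (L:ℤ) + da + (q - m') - i = (da:ℤ) - (k:ℤ) + N - 1 - ((m' + i : ℕ) : ℤ) := by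
      rw [hq]; push_cast; ring
    have e2 : ((L:ℤ) - N - 1 + m' + db) + i = (db:ℤ) + (L:ℤ) - N - 1 + ((m' + i : ℕ) : ℤ) := by
      push_cast; ring
    rw [e1, e2]
  have hD : VA.diamondEntry a b k N L
      = ∑ m' ∈ Finset.range (N+1), cchoose q m' • VA.resPow (q - m') L a b := by
    unfold GRVertexAlgebra.diamondEntry
    refine Finset.sum_congr rfl fun m' _ => ?_
    rw [hq]
    congr 2
    ring
  rw [hD, map_sum]
  have h3 : ∀ m' ∈ Finset.range (N+1),
      χ (cchoose q m' • VA.resPow (q - m') L a b)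
      = ∑ i ∈ Finset.range (N+1),
          (cchoose q m' * ((-1:ℂ)^i * cchoose (q - m') i)) • T (m' + i) := by
    intro m' _
    rw [map_smul, hres m']
    have hsupS : (Function.support fun i : ℕ =>
        ((-1:ℂ)^i * cchoose (q - m') i) • T (m' + i)).Finite := by
      refine Set.Finite.subset (finite_int_le N) ?_
      intro i hi
      simp only [Function.mem_support] at hi
      simp only [Set.mem_setOf_eq]
      by_contra hc
      push_neg at hc
      exact hi (by rw [hTvan (m' + i) (by omega), smul_zero])
    rw [smul_finsum' _ hsupS]
    rw [finsum_eq_sum_of_support_subset _ (s := Finset.range (N+1)) ?_]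
    · exact Finset.sum_congr rfl fun i _ => by rw [smul_smul]
    · intro i hi
      simp only [Function.mem_support] at hi
      simp only [Finset.coe_range, Set.mem_Iio]
      by_contra hc
      push_neg at hc
      apply hi
      rw [hTvan (m' + i) (by omega), smul_zero, smul_zero]
  rw [Finset.sum_congr rfl h3, comb_collapse q N T hTvan, hT]
  simp only [Nat.cast_zero, sub_zero, add_zero]

end LBGModule

namespace GRVertexAlgebra

variable (VA : GRVertexAlgebra V)

lemma jEntry_zero (v : V) (wtv : ℤ) (k : ℕ) (l p n : ℤ) :
    VA.jEntry 0 v wtv k l p n = 0 := by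
  unfold GRVertexAlgebra.jEntry
  have h1 : ∀ j : ℕ, (if (j:ℤ) ≤ n + p then
      ((-1:ℂ)^j * cchoose p j) • VA.diamondEntry v 0 k (n+p-j).toNat (l+p).toNat else 0)
      = 0 := by
    intro j
    split
    · rw [VA.diamondEntry_zero_right, smul_zero]
    · rfl
  have h2 : ∀ j : ℕ, (if (j:ℤ) ≤ l - n + (k:ℤ) + p then
      ((-1:ℂ)^((p:ℤ) - (j:ℤ)) * cchoose p j) •
        VA.diamondEntry 0 v k (l - n + (k:ℤ) + p - j).toNat (l+p).toNat else 0) = 0 := by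
    intro j
    split
    · rw [VA.diamondEntry_zero_left, smul_zero]
    · rfl
  have h3 : ∀ j : ℕ, cchoose (wtv + n - (k:ℤ) - 1) j • VA.mode v (p + j) 0 = 0 := by
    intro j
    rw [VA.mode_zero_right, smul_zero]
  simp only [h1, h2, h3, finsum_zero, sub_zero]

lemma jEntry_add (u u' v : V) (wtv : ℤ) (k : ℕ) (l p n : ℤ) :
    VA.jEntry (u + u') v wtv k l p n
      = VA.jEntry u v wtv k l p n + VA.jEntry u' v wtv k l p n := by
  unfold GRVertexAlgebra.jEntry
  have h1 : (∑ᶠ j : ℕ, if (j:ℤ) ≤ n + p then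
        ((-1:ℂ)^j * cchoose p j) • VA.diamondEntry v (u+u') k (n+p-j).toNat (l+p).toNat else 0)
      = (∑ᶠ j : ℕ, if (j:ℤ) ≤ n + p then
          ((-1:ℂ)^j * cchoose p j) • VA.diamondEntry v u k (n+p-j).toNat (l+p).toNat else 0)
        + (∑ᶠ j : ℕ, if (j:ℤ) ≤ n + p then
          ((-1:ℂ)^j * cchoose p j) • VA.diamondEntry v u' k (n+p-j).toNat (l+p).toNat else 0) := by
    have h : ∀ j : ℕ, (if (j:ℤ) ≤ n + p then
        ((-1:ℂ)^j * cchoose p j) • VA.diamondEntry v (u+u') k (n+p-j).toNat (l+p).toNat else 0)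
        = (if (j:ℤ) ≤ n + p then
            ((-1:ℂ)^j * cchoose p j) • VA.diamondEntry v u k (n+p-j).toNat (l+p).toNat else 0)
          + (if (j:ℤ) ≤ n + p then
            ((-1:ℂ)^j * cchoose p j) • VA.diamondEntry v u' k (n+p-j).toNat (l+p).toNat else 0) := by
      intro j
      split
      · rw [VA.diamondEntry_add_right, smul_add]
      · rw [add_zero]
    rw [finsum_congr h]
    exact finsum_add_distrib
      (Set.Finite.subset (finite_int_le (n+p)) (support_ite_le _ _))
      (Set.Finite.subset (finite_int_le (n+p)) (support_ite_le _ _))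
  have h2 : (∑ᶠ j : ℕ, if (j:ℤ) ≤ l - n + (k:ℤ) + p then
        ((-1:ℂ)^((p:ℤ) - (j:ℤ)) * cchoose p j) •
          VA.diamondEntry (u+u') v k (l - n + (k:ℤ) + p - j).toNat (l+p).toNat else 0)
      = (∑ᶠ j : ℕ, if (j:ℤ) ≤ l - n + (k:ℤ) + p then
          ((-1:ℂ)^((p:ℤ) - (j:ℤ)) * cchoose p j) •
            VA.diamondEntry u v k (l - n + (k:ℤ) + p - j).toNat (l+p).toNat else 0)
        + (∑ᶠ j : ℕ, if (j:ℤ) ≤ l - n + (k:ℤ) + p then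
          ((-1:ℂ)^((p:ℤ) - (j:ℤ)) * cchoose p j) •
            VA.diamondEntry u' v k (l - n + (k:ℤ) + p - j).toNat (l+p).toNat else 0) := by
    have h : ∀ j : ℕ, (if (j:ℤ) ≤ l - n + (k:ℤ) + p then
        ((-1:ℂ)^((p:ℤ) - (j:ℤ)) * cchoose p j) •
          VA.diamondEntry (u+u') v k (l - n + (k:ℤ) + p - j).toNat (l+p).toNat else 0)
        = (if (j:ℤ) ≤ l - n + (k:ℤ) + p then
            ((-1:ℂ)^((p:ℤ) - (j:ℤ)) * cchoose p j) •
              VA.diamondEntry u v k (l - n + (k:ℤ) + p - j).toNat (l+p).toNat else 0)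
          + (if (j:ℤ) ≤ l - n + (k:ℤ) + p then
            ((-1:ℂ)^((p:ℤ) - (j:ℤ)) * cchoose p j) •
              VA.diamondEntry u' v k (l - n + (k:ℤ) + p - j).toNat (l+p).toNat else 0) := by
      intro j
      split
      · rw [VA.diamondEntry_add_left, smul_add]
      · rw [add_zero]
    rw [finsum_congr h]
    exact finsum_add_distrib
      (Set.Finite.subset (finite_int_le _) (support_ite_le _ _))
      (Set.Finite.subset (finite_int_le _) (support_ite_le _ _))
  have h3 : (∑ᶠ j : ℕ, cchoose (wtv + n - (k:ℤ) - 1) j • VA.mode v (p + j) (u + u'))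
      = (∑ᶠ j : ℕ, cchoose (wtv + n - (k:ℤ) - 1) j • VA.mode v (p + j) u)
        + (∑ᶠ j : ℕ, cchoose (wtv + n - (k:ℤ) - 1) j • VA.mode v (p + j) u') := by
    have h : ∀ j : ℕ, cchoose (wtv + n - (k:ℤ) - 1) j • VA.mode v (p + j) (u + u')
        = cchoose (wtv + n - (k:ℤ) - 1) j • VA.mode v (p + j) u
          + cchoose (wtv + n - (k:ℤ) - 1) j • VA.mode v (p + j) u' := by
      intro j
      rw [VA.mode_add_right, smul_add]
    rw [finsum_congr h]
    exact finsum_add_distrib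
      (VA.smul_mode_support v u p _ _ (fun j => rfl))
      (VA.smul_mode_support v u' p _ _ (fun j => rfl))
  rw [h1, h2, h3]
  abel

lemma usingle_apply (v : V) (k l k' l' : ℕ) :
    (Usingle v k l).1 k' l' = if k' = k ∧ l' = l then v else 0 := rfl

/-- Extraction of the `(k, l)` entry, as a linear map `U^∞(V) →ₗ V`. -/
def entryL (k l : ℕ) : UInf V →ₗ[ℂ] V where
  toFun A := A.1 k l
  map_add' A B := rfl
  map_smul' c A := rfl

lemma entry_udiamond_single (a b : V) (kk N LL k' l' : ℕ) :
    (VA.udiamond (Usingle a kk N) (Usingle b N LL)).1 k' l'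
      = if k' = kk ∧ l' = LL then VA.diamondEntry a b kk N LL else 0 := by
  show (∑ᶠ n'' : ℕ, VA.diamondEntry ((Usingle a kk N).1 k' n'')
      ((Usingle b N LL).1 n'' l') k' n'' l') = _
  by_cases h : k' = kk ∧ l' = LL
  · obtain ⟨rfl, rfl⟩ := h
    rw [if_pos ⟨rfl, rfl⟩]
    rw [finsum_eq_single _ N (fun n'' hn'' => by
      rw [usingle_apply, if_neg (fun hc => hn'' hc.2), VA.diamondEntry_zero_left])]
    rw [usingle_apply, usingle_apply, if_pos ⟨rfl, rfl⟩, if_pos ⟨rfl, rfl⟩]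
  · rw [if_neg h]
    have h0 : ∀ n'' : ℕ, VA.diamondEntry ((Usingle a kk N).1 k' n'')
        ((Usingle b N LL).1 n'' l') k' n'' l' = 0 := by
      intro n''
      rcases not_and_or.mp h with hk | hl
      · rw [usingle_apply, if_neg (fun hc => hk hc.1), VA.diamondEntry_zero_left]
      · rw [usingle_apply (l' := l'), if_neg (fun hc => hl hc.2), VA.diamondEntry_zero_right]
    simp only [h0]
    exact finsum_zero

lemma jElt_entry (u v : V) (wtv : ℤ) (k : ℕ) (l p n : ℤ) (k' n' : ℕ) :
    (VA.jElt u v wtv k l p n).1 k' n'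
      = if k' = k ∧ n' = (l + p).toNat then VA.jEntry u v wtv k l p n else 0 := by
  classical
  have hsub : (VA.jElt u v wtv k l p n).1 k' n'
      = entryL (V := V) k' n' (VA.jElt u v wtv k l p n) := rfl
  rw [hsub]
  unfold GRVertexAlgebra.jElt
  rw [map_sub, map_sub]
  have hm1 := (entryL (V := V) k' n').toAddMonoidHom.map_finsum
    (f := fun j : ℕ => if (j:ℤ) ≤ n + p then
      ((-1:ℂ)^j * cchoose p j) • VA.udiamond (Usingle v k (n + p - j).toNat)
        (Usingle u (n + p - j).toNat (l + p).toNat) else 0)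
    (Set.Finite.subset (finite_int_le (n+p)) (support_ite_le _ _))
  simp only [LinearMap.toAddMonoidHom_coe] at hm1
  have hm2 := (entryL (V := V) k' n').toAddMonoidHom.map_finsum
    (f := fun j : ℕ => if (j:ℤ) ≤ l - n + (k:ℤ) + p then
      ((-1:ℂ)^((p:ℤ) - (j:ℤ)) * cchoose p j) •
        VA.udiamond (Usingle u k (l - n + (k:ℤ) + p - j).toNat)
          (Usingle v (l - n + (k:ℤ) + p - j).toNat (l + p).toNat) else 0)
    (Set.Finite.subset (finite_int_le _) (support_ite_le _ _))
  simp only [LinearMap.toAddMonoidHom_coe] at hm2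
  rw [hm1, hm2]
  have he1 : ∀ j : ℕ, entryL (V := V) k' n' (if (j:ℤ) ≤ n + p then
      ((-1:ℂ)^j * cchoose p j) • VA.udiamond (Usingle v k (n + p - j).toNat)
        (Usingle u (n + p - j).toNat (l + p).toNat) else 0)
      = if k' = k ∧ n' = (l + p).toNat then
          (if (j:ℤ) ≤ n + p then ((-1:ℂ)^j * cchoose p j) •
            VA.diamondEntry v u k (n + p - j).toNat (l + p).toNat else 0) else 0 := by
    intro j
    rw [apply_ite (entryL (V := V) k' n'), map_smul, map_zero]
    have : entryL (V := V) k' n' (VA.udiamond (Usingle v k (n + p - j).toNat)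
        (Usingle u (n + p - j).toNat (l + p).toNat))
        = if k' = k ∧ n' = (l + p).toNat then
            VA.diamondEntry v u k (n + p - j).toNat (l + p).toNat else 0 :=
      VA.entry_udiamond_single v u k (n + p - j).toNat (l + p).toNat k' n'
    rw [this]
    split_ifs <;> simp
  have he2 : ∀ j : ℕ, entryL (V := V) k' n' (if (j:ℤ) ≤ l - n + (k:ℤ) + p then
      ((-1:ℂ)^((p:ℤ) - (j:ℤ)) * cchoose p j) •
        VA.udiamond (Usingle u k (l - n + (k:ℤ) + p - j).toNat)
          (Usingle v (l - n + (k:ℤ) + p - j).toNat (l + p).toNat) else 0)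
      = if k' = k ∧ n' = (l + p).toNat then
          (if (j:ℤ) ≤ l - n + (k:ℤ) + p then ((-1:ℂ)^((p:ℤ) - (j:ℤ)) * cchoose p j) •
            VA.diamondEntry u v k (l - n + (k:ℤ) + p - j).toNat (l + p).toNat else 0) else 0 := by
    intro j
    rw [apply_ite (entryL (V := V) k' n'), map_smul, map_zero]
    have : entryL (V := V) k' n' (VA.udiamond (Usingle u k (l - n + (k:ℤ) + p - j).toNat)
        (Usingle v (l - n + (k:ℤ) + p - j).toNat (l + p).toNat))
        = if k' = k ∧ n' = (l + p).toNat then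
            VA.diamondEntry u v k (l - n + (k:ℤ) + p - j).toNat (l + p).toNat else 0 :=
      VA.entry_udiamond_single u v k (l - n + (k:ℤ) + p - j).toNat (l + p).toNat k' n'
    rw [this]
    split_ifs <;> simp
  rw [finsum_congr he1, finsum_congr he2]
  have he3 : entryL (V := V) k' n' (Usingle (∑ᶠ j : ℕ, cchoose (wtv + n - (k:ℤ) - 1) j •
      VA.mode v (p + j) u) k (l + p).toNat)
      = if k' = k ∧ n' = (l + p).toNat then
          (∑ᶠ j : ℕ, cchoose (wtv + n - (k:ℤ) - 1) j • VA.mode v (p + j) u) else 0 := rfl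
  rw [he3]
  by_cases ht : k' = k ∧ n' = (l + p).toNat
  · obtain ⟨rfl, rfl⟩ := ht
    simp only [eq_self_iff_true, and_self, if_true]
    rfl
  · simp only [if_neg ht, finsum_zero, sub_zero]

end GRVertexAlgebra

namespace LBGModule

variable {VA : GRVertexAlgebra V} {W : Type} [AddCommGroup W] [Module ℂ W]
variable (M : LBGModule VA W)

lemma chi_jEntry_homog {g wtv : ℤ} {u v : V} (hu : VA.proj g u = u) (hv : VA.proj wtv v = v)
    (k : ℕ) (l p n : ℤ) (hlp : 0 ≤ l + p) {w : W}
    (hw : w ∈ M.OmegaSet (((l+p).toNat : ℕ) : ℤ)) :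
    M.wActL k (l+p).toNat w (VA.jEntry u v wtv k l p n) = 0 := by
  have hL' : (((l+p).toNat : ℕ) : ℤ) = l + p := Int.toNat_of_nonneg hlp
  unfold GRVertexAlgebra.jEntry
  rw [map_sub, map_sub]
  have hF1 : M.wActL k (l+p).toNat w (∑ᶠ j : ℕ, if (j:ℤ) ≤ n + p then
        ((-1:ℂ)^j * cchoose p j) • VA.diamondEntry v u k (n + p - j).toNat (l + p).toNat else 0)
      = ∑ᶠ i : ℕ, ((-1:ℂ)^(i:ℕ) * cchoose p i) •
          M.wmode v ((wtv + n - (k:ℤ) - 1) + p - i)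
            (M.wmode u ((g + l - n - 1) + i) w) := by
    have hmap := (M.wActL k (l+p).toNat w).toAddMonoidHom.map_finsum
      (f := fun j : ℕ => if (j:ℤ) ≤ n + p then
        ((-1:ℂ)^j * cchoose p j) • VA.diamondEntry v u k (n + p - j).toNat (l + p).toNat else 0)
      (Set.Finite.subset (finite_int_le (n+p)) (support_ite_le _ _))
    simp only [LinearMap.toAddMonoidHom_coe] at hmap
    rw [hmap]
    refine finsum_congr fun j => ?_
    by_cases hj : (j:ℤ) ≤ n + p
    · rw [if_pos hj, map_smul, M.chi_diamond hv hu k (n+p-j).toNat (l+p).toNat hw]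
      have hN : (((n+p-j).toNat : ℕ) : ℤ) = n + p - j := Int.toNat_of_nonneg (by omega)
      have e1 : (wtv:ℤ) - (k:ℤ) + (((n+p-j).toNat : ℕ) : ℤ) - 1
          = (wtv + n - (k:ℤ) - 1) + p - j := by rw [hN]; ring
      have e2 : (g:ℤ) + (((l+p).toNat : ℕ) : ℤ) - (((n+p-j).toNat : ℕ) : ℤ) - 1
          = (g + l - n - 1) + j := by rw [hN, hL']; ring
      rw [e1, e2]
    · rw [if_neg hj, map_zero,
        M.omega_vanish hw hu (show (g:ℤ) - ((g + l - n - 1) + j) - 1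
          < -((((l+p).toNat : ℕ)) : ℤ) by rw [hL']; omega),
        M.wmode_zero_right, smul_zero]
  have hF2 : M.wActL k (l+p).toNat w (∑ᶠ j : ℕ, if (j:ℤ) ≤ l - n + (k:ℤ) + p then
        ((-1:ℂ)^((p:ℤ) - (j:ℤ)) * cchoose p j) •
          VA.diamondEntry u v k (l - n + (k:ℤ) + p - j).toNat (l + p).toNat else 0)
      = ∑ᶠ i : ℕ, ((-1:ℂ)^(p + (i:ℤ)) * cchoose p i) •
          M.wmode u ((g + l - n - 1) + p - i)
            (M.wmode v ((wtv + n - (k:ℤ) - 1) + i) w) := by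
    have hmap := (M.wActL k (l+p).toNat w).toAddMonoidHom.map_finsum
      (f := fun j : ℕ => if (j:ℤ) ≤ l - n + (k:ℤ) + p then
        ((-1:ℂ)^((p:ℤ) - (j:ℤ)) * cchoose p j) •
          VA.diamondEntry u v k (l - n + (k:ℤ) + p - j).toNat (l + p).toNat else 0)
      (Set.Finite.subset (finite_int_le _) (support_ite_le _ _))
    simp only [LinearMap.toAddMonoidHom_coe] at hmap
    rw [hmap]
    refine finsum_congr fun j => ?_
    by_cases hj : (j:ℤ) ≤ l - n + (k:ℤ) + p
    · rw [if_pos hj, map_smul, M.chi_diamond hu hv k (l - n + (k:ℤ) + p - j).toNat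
        (l+p).toNat hw, neg_one_zpow_sub_eq_add]
      have hN : (((l - n + (k:ℤ) + p - j).toNat : ℕ) : ℤ) = l - n + (k:ℤ) + p - j :=
        Int.toNat_of_nonneg (by omega)
      have e1 : (g:ℤ) - (k:ℤ) + (((l - n + (k:ℤ) + p - j).toNat : ℕ) : ℤ) - 1
          = (g + l - n - 1) + p - j := by rw [hN]; ring
      have e2 : (wtv:ℤ) + (((l+p).toNat : ℕ) : ℤ) - (((l - n + (k:ℤ) + p - j).toNat : ℕ) : ℤ) - 1
          = (wtv + n - (k:ℤ) - 1) + j := by rw [hN, hL']; ring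
      rw [e1, e2]
    · rw [if_neg hj, map_zero,
        M.omega_vanish hw hv (show (wtv:ℤ) - ((wtv + n - (k:ℤ) - 1) + j) - 1
          < -((((l+p).toNat : ℕ)) : ℤ) by rw [hL']; omega),
        M.wmode_zero_right, smul_zero]
  have hF3 : M.wActL k (l+p).toNat w
        (∑ᶠ j : ℕ, cchoose (wtv + n - (k:ℤ) - 1) j • VA.mode v (p + j) u)
      = ∑ᶠ i : ℕ, cchoose (wtv + n - (k:ℤ) - 1) i •
          M.wmode (VA.mode v (p + i) u)
            ((wtv + n - (k:ℤ) - 1) + (g + l - n - 1) - i) w := by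
    have hmap := (M.wActL k (l+p).toNat w).toAddMonoidHom.map_finsum
      (f := fun j : ℕ => cchoose (wtv + n - (k:ℤ) - 1) j • VA.mode v (p + j) u)
      (VA.smul_mode_support v u p _ _ (fun j => rfl))
    simp only [LinearMap.toAddMonoidHom_coe] at hmap
    rw [hmap]
    refine finsum_congr fun j => ?_
    rw [map_smul, M.wActL_homog (VA.mode_wt hv hu (p + (j:ℤ))) k (l+p).toNat w]
    congr 2
    rw [hL']
    ring
  rw [hF1, hF2, hF3, M.jacobi v u w p (wtv + n - (k:ℤ) - 1) (g + l - n - 1)]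
  abel

lemma chi_jEntry {wtv : ℤ} (u : V) {v : V} (hv : VA.proj wtv v = v)
    (k : ℕ) (l p n : ℤ) (hlp : 0 ≤ l + p) {w : W}
    (hw : w ∈ M.OmegaSet (((l+p).toNat : ℕ) : ℤ)) :
    M.wActL k (l+p).toNat w (VA.jEntry u v wtv k l p n) = 0 := by
  classical
  set Φ : V →+ W :=
    { toFun := fun x => M.wActL k (l+p).toNat w (VA.jEntry x v wtv k l p n)
      map_zero' := by
        show M.wActL k (l+p).toNat w (VA.jEntry 0 v wtv k l p n) = 0
        rw [VA.jEntry_zero, map_zero]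
      map_add' := fun x y => by
        show M.wActL k (l+p).toNat w (VA.jEntry (x + y) v wtv k l p n)
          = M.wActL k (l+p).toNat w (VA.jEntry x v wtv k l p n)
            + M.wActL k (l+p).toNat w (VA.jEntry y v wtv k l p n)
        rw [VA.jEntry_add, map_add] } with hΦ
  have hgoal : Φ u = 0 := by
    have h0 : ∀ m : ℤ, Φ (VA.proj m u) = 0 := by
      intro m
      show M.wActL k (l+p).toNat w (VA.jEntry (VA.proj m u) v wtv k l p n) = 0
      exact M.chi_jEntry_homog (by rw [VA.proj_idem, if_pos rfl]) hv k l p n hlp hw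
    calc Φ u = Φ (∑ᶠ m : ℤ, VA.proj m u) := by rw [VA.proj_sum]
      _ = ∑ᶠ m : ℤ, Φ (VA.proj m u) := Φ.map_finsum (VA.proj_support_finite u)
      _ = 0 := by simp only [h0]; exact finsum_zero
  exact hgoal

end LBGModule

end HuangAux


open GRVertexAlgebra in
/-- For a grading-restricted vertex algebra `V`, `k ∈ ℕ`, `l, p, n ∈ ℤ` with `l + p ∈ ℕ`,
and `u, v ∈ V` with `v` homogeneous of weight `wtv`, Huang's Jacobi-identity element
`∑_{j, n+p-j≥0} (-1)^j C(p,j) [v]_{k,n+p-j} ⋄ [u]_{n+p-j,l+p}`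
`- ∑_{j, l-n+k+p-j≥0} (-1)^{p-j} C(p,j) [u]_{k,l-n+k+p-j} ⋄ [v]_{l-n+k+p-j,l+p}`
`- ∑_{j∈ℕ} C(wt v + n - k - 1, j) [v_{p+j} u]_{k,l+p}`
lies in `Q^∞(V)`. -/
theorem jacobi_elements_mem_Qinf {V : Type} [AddCommGroup V] [Module ℂ V]
    (VA : GRVertexAlgebra V) (u v : V) (wtv : ℤ) (hv : VA.proj wtv v = v)
    (k : ℕ) (l p n : ℤ) (hlp : 0 ≤ l + p) :
    VA.memQ (VA.jElt u v wtv k l p n) := by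
  intro W _ _ M nn kk w hw
  rw [VA.jElt_entry u v wtv k l p n kk nn]
  by_cases ht : kk = k ∧ nn = (l + p).toNat
  · rw [if_pos ht]
    obtain ⟨h1, h2⟩ := ht
    rw [h2] at hw
    rw [h1, h2]
    have h0 : M.wAct (VA.jEntry u v wtv k l p n) k (l+p).toNat w = 0 :=
      M.chi_jEntry u hv k l p n hlp hw
    rw [h0]
    exact M.zero_mem_OmegaSet _
  · rw [if_neg ht]
    have h0 : M.wAct (0 : V) kk nn w = 0 := map_zero (M.wActL kk nn w)
    rw [h0]
    exact M.zero_mem_OmegaSet _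
end
end

section
/- Let V be a grading-restricted vertex algebra and let k, k', l, l' ∈ ℕ with l' ≥ l and k' ≥ k. If v ∈ V satisfies [v]_{k'l'} ∈ O^∞_∘(V), then [v]_{kl} ∈ O^∞_∘(V). -/
noncomputable section

open scoped BigOperators

section OcircShiftAux

open Finset

lemma cchoose_zero_right (m : ℤ) : cchoose m 0 = 1 := by simp [cchoose]

lemma cchoose_pascal (L : ℤ) (s : ℕ) :
    cchoose (L + 1) (s + 1) = cchoose L (s + 1) + cchoose L s := by
  unfold cchoose
  have h1 : (∏ i ∈ range (s + 1), (((L + 1 : ℤ) : ℂ) - (i : ℂ)))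
      = ((L : ℂ) + 1) * ∏ i ∈ range s, ((L : ℂ) - (i : ℂ)) := by
    rw [Finset.prod_range_succ']
    push_cast
    rw [mul_comm]
    congr 1
    · ring_nf
    · refine Finset.prod_congr rfl fun i _ => by ring
  have h2 : (∏ i ∈ range (s + 1), ((L : ℂ) - (i : ℂ)))
      = (∏ i ∈ range s, ((L : ℂ) - (i : ℂ))) * ((L : ℂ) - (s : ℂ)) :=
    Finset.prod_range_succ _ _
  rw [h1, h2]
  have hfac : ((s + 1).factorial : ℂ) = ((s : ℂ) + 1) * (s.factorial : ℂ) := by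
    push_cast [Nat.factorial_succ]; ring
  have hs0 : (s.factorial : ℂ) ≠ 0 := Nat.cast_ne_zero.mpr (Nat.factorial_ne_zero s)
  have hs1 : ((s : ℂ) + 1) ≠ 0 := by
    intro hcon
    have : ((s : ℂ) + 1) = ((s + 1 : ℕ) : ℂ) := by push_cast; ring
    rw [this] at hcon
    exact Nat.cast_ne_zero.mpr (Nat.succ_ne_zero s) hcon
  rw [hfac]
  field_simp
  ring

variable {V : Type} [AddCommGroup V] [Module ℂ V]

lemma finsum_coef_eq_sum (c : ℕ → ℂ) (f : ℕ → V) (n : ℕ)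
    (hf : ∀ s, n ≤ s → f s = 0) :
    ∑ᶠ s, c s • f s = ∑ s ∈ range n, c s • f s := by
  apply finsum_eq_sum_of_support_subset
  intro s hs
  simp only [Function.mem_support] at hs
  simp only [Finset.coe_range, Set.mem_Iio]
  by_contra hcon
  exact hs (by rw [hf s (le_of_not_gt hcon), smul_zero])

lemma finsum_pascal (M : ℤ) (f : ℕ → V) (n : ℕ) (hf : ∀ s, n ≤ s → f s = 0) :
    ∑ᶠ s, cchoose (M + 1) s • f s
      = (∑ᶠ s, cchoose M s • f s) + ∑ᶠ s, cchoose M s • f (s + 1) := by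
  have hf' : ∀ s, n ≤ s → f (s + 1) = 0 := fun s hs => hf (s + 1) (by omega)
  rw [finsum_coef_eq_sum (fun s => cchoose (M + 1) s) f (n + 1)
      (fun s hs => hf s (by omega)),
    finsum_coef_eq_sum (fun s => cchoose M s) f (n + 1) (fun s hs => hf s (by omega)),
    finsum_coef_eq_sum (fun s => cchoose M s) (fun s => f (s + 1)) (n + 1)
      (fun s hs => hf' s (by omega))]
  rw [Finset.sum_range_succ' (fun s => cchoose (M + 1) s • f s) n,
    Finset.sum_range_succ' (fun s => cchoose M s • f s) n,
    Finset.sum_range_succ (fun s => cchoose M s • f (s + 1)) n]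
  rw [hf' n le_rfl, smul_zero, add_zero, cchoose_zero_right, cchoose_zero_right]
  have hterm : ∀ s, cchoose (M + 1) (s + 1) • f (s + 1)
      = cchoose M (s + 1) • f (s + 1) + cchoose M s • f (s + 1) := by
    intro s
    rw [cchoose_pascal, add_smul]
  simp only [hterm]
  rw [Finset.sum_add_distrib]
  abel

lemma finsum_cchoose_binom (d : ℕ) (L : ℤ) (f : ℕ → V) (n : ℕ)
    (hf : ∀ s, n ≤ s → f s = 0) :
    ∑ᶠ s, cchoose (L + d) s • f s
      = ∑ j ∈ range (d + 1), (d.choose j : ℂ) • ∑ᶠ s, cchoose L s • f (s + j) := by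
  induction d generalizing f n with
  | zero =>
      simp only [Nat.cast_zero, add_zero, zero_add, range_one, Finset.sum_singleton,
        Nat.choose_self, Nat.cast_one, one_smul]
  | succ d ih =>
      have hL : (L + ((d + 1 : ℕ) : ℤ)) = (L + d) + 1 := by push_cast; ring
      rw [hL, finsum_pascal (L + d) f n hf]
      rw [ih f n hf]
      rw [ih (fun s => f (s + 1)) n (fun s hs => hf (s + 1) (by omega))]
      have hshift : ∀ j : ℕ, (∑ᶠ s, cchoose L s • f (s + j + 1))
          = ∑ᶠ s, cchoose L s • f (s + (j + 1)) := by
        intro j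
        apply finsum_congr
        intro s
        rw [add_assoc]
      simp only [hshift]
      -- now a pure Finset Pascal identity
      set g : ℕ → V := fun j => ∑ᶠ s, cchoose L s • f (s + j) with hg
      rw [Finset.sum_range_succ' (fun j => ((d + 1).choose j : ℂ) • g j) (d + 1)]
      rw [Finset.sum_range_succ' (fun j => (d.choose j : ℂ) • g j) d]
      have hpas : ∀ j, (((d + 1).choose (j + 1) : ℕ) : ℂ) • g (j + 1)
          = (d.choose j : ℂ) • g (j + 1) + (d.choose (j + 1) : ℂ) • g (j + 1) := by
        intro j
        rw [Nat.choose_succ_succ, Nat.cast_add, add_smul]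
      simp only [hpas]
      rw [Finset.sum_add_distrib]
      rw [Finset.sum_range_succ (fun j => (d.choose j : ℂ) • g (j + 1)) d]
      rw [Finset.sum_range_succ (fun j => (d.choose (j + 1) : ℂ) • g (j + 1)) d]
      simp only [Nat.choose_succ_self, Nat.cast_zero, zero_smul, add_zero,
        Nat.choose_zero_right, Nat.cast_one, one_smul]
      abel

lemma resPow_binom (VA : GRVertexAlgebra V) (N l : ℤ) (d : ℕ) (u v : V) :
    VA.resPow N (l + d) u v
      = ∑ j ∈ range (d + 1), (d.choose j : ℂ) • VA.resPow (N + j) l u v := by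
  classical
  have hm : ∀ m : ℤ,
      (∑ᶠ i : ℕ, cchoose (l + d + m) i • VA.mode (VA.proj m u) (N + i) v)
        = ∑ j ∈ range (d + 1), (d.choose j : ℂ) •
            ∑ᶠ i : ℕ, cchoose (l + m) i • VA.mode (VA.proj m u) ((N + j) + i) v := by
    intro m
    obtain ⟨N₀, hN₀⟩ := VA.lower_trunc (VA.proj m u) v
    set f : ℕ → V := fun s => VA.mode (VA.proj m u) (N + s) v with hfdef
    have hbound : ∀ s, (N₀ - N).toNat ≤ s → f s = 0 := by
      intro s hs
      exact hN₀ (N + s) (by omega)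
    have key := finsum_cchoose_binom d (l + m) f _ hbound
    have harg : (l + d + m : ℤ) = (l + m) + d := by ring
    rw [harg]
    rw [key]
    refine Finset.sum_congr rfl fun j _ => ?_
    congr 1
    apply finsum_congr
    intro s
    congr 1
    simp only [hfdef]
    congr 1
    push_cast
    ring
  set S : Finset ℤ := (VA.proj_support_finite u).toFinset with hS
  have hproj : ∀ m : ℤ, m ∉ S → VA.proj m u = 0 := by
    intro m hm'
    by_contra hcon
    exact hm' (by rw [hS]; exact (VA.proj_support_finite u).mem_toFinset.mpr hcon)
  have hsupp : ∀ (L N' : ℤ),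
      (Function.support fun m : ℤ =>
        ∑ᶠ i : ℕ, cchoose (L + m) i • VA.mode (VA.proj m u) (N' + i) v) ⊆ ↑S := by
    intro L N' m hm'
    simp only [Function.mem_support] at hm'
    by_contra hms
    apply hm'
    have h0 : ∀ i : ℕ, cchoose (L + m) i • VA.mode (VA.proj m u) (N' + i) v = 0 := by
      intro i
      rw [hproj m hms, VA.mode_zero_left, smul_zero]
    simp only [h0]
    exact finsum_zero
  unfold GRVertexAlgebra.resPow
  rw [finsum_eq_sum_of_support_subset _ (hsupp (l + d) N)]
  have hres : ∀ j : ℕ,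
      (∑ᶠ m : ℤ, ∑ᶠ i : ℕ, cchoose (l + m) i • VA.mode (VA.proj m u) ((N + j) + i) v)
        = ∑ m ∈ S, ∑ᶠ i : ℕ, cchoose (l + m) i • VA.mode (VA.proj m u) ((N + j) + i) v :=
    fun j => finsum_eq_sum_of_support_subset _ (hsupp l (N + j))
  simp only [hres]
  simp only [hm]
  rw [Finset.sum_comm]
  refine Finset.sum_congr rfl fun j _ => ?_
  rw [Finset.smul_sum]

lemma circExpr_shift (VA : GRVertexAlgebra V) (k k' l l' : ℕ)
    (hk : k ≤ k') (hl : l ≤ l') (u w : V) (p : ℕ) :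
    VA.circExpr u w k' l' p ∈ Submodule.span ℂ
      {x : V | ∃ (u v : V) (p : ℕ), x = VA.circExpr u v k l p} := by
  classical
  set d : ℕ := l' - l with hd
  have hl' : (l' : ℤ) = (l : ℤ) + (d : ℤ) := by omega
  unfold GRVertexAlgebra.circExpr
  rw [hl']
  rw [resPow_binom]
  refine Submodule.sum_mem _ fun j hj => ?_
  refine Submodule.smul_mem _ _ ?_
  apply Submodule.subset_span
  refine ⟨u, w, (k' - k) + (d - j) + p, ?_⟩
  show _ = VA.resPow _ _ u w
  congr 1
  simp only [Finset.mem_range] at hj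
  push_cast
  omega

end OcircShiftAux

open GRVertexAlgebra in
/-- Let `V` be a grading-restricted vertex algebra and `k, k', l, l' ∈ ℕ` with `l' ≥ l`
and `k' ≥ k`.  If `[v]_{k'l'} ∈ O^∞_∘(V)` then `[v]_{kl} ∈ O^∞_∘(V)`. -/
theorem Ocirc_shift {V : Type} [AddCommGroup V] [Module ℂ V]
    (VA : GRVertexAlgebra V) (k k' l l' : ℕ) (hk : k ≤ k') (hl : l ≤ l') (v : V)
    (h : VA.memOcirc (Usingle v k' l')) :
    VA.memOcirc (Usingle v k l) := by
  intro k₀ l₀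
  by_cases h₀ : k₀ = k ∧ l₀ = l
  · obtain ⟨rfl, rfl⟩ := h₀
    have hv : v ∈ Submodule.span ℂ
        {x : V | ∃ (u w : V) (p : ℕ), x = VA.circExpr u w k' l' p} := by
      have := h k' l'
      simpa [Usingle] using this
    have hsub : {x : V | ∃ (u w : V) (p : ℕ), x = VA.circExpr u w k' l' p}
        ⊆ (Submodule.span ℂ
            {x : V | ∃ (u w : V) (p : ℕ), x = VA.circExpr u w k₀ l₀ p} : Set V) := by
      rintro x ⟨u, w, p, rfl⟩
      exact circExpr_shift VA k₀ k' l₀ l' hk hl u w p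
    have : v ∈ Submodule.span ℂ
        {x : V | ∃ (u w : V) (p : ℕ), x = VA.circExpr u w k₀ l₀ p} :=
      (Submodule.span_le.mpr hsub) hv
    simpa [Usingle] using this
  · have : (Usingle v k l).1 k₀ l₀ = 0 := by
      simp only [Usingle]
      rw [if_neg h₀]
    rw [this]
    exact Submodule.zero_mem _
end
end
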